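/- Let p be a prime, G a finite group, E a normal subgroup of G, and P a p-subgroup of G such that Q := P ∩ E is a Sylow p-subgroup of E. Let H := E ⋊ P be the external semidirect product for the conjugation action of P on E, and set ΔQ := {(x,x⁻¹) : x ∈ Q}. Then the product subgroup (ΔQ)(1×P) of H (which is a subgroup since ΔQ is normal in H) is a Sylow p-subgroup of H. -/

import Mathlib

open SemidirectProduct
open scoped Pointwise

/-- The conjugation action of a subgroup `P` on a normal subgroup `E`. -/
def conjAction {G : Type*} [Group G] (E P : Subgroup G) [E.Normal] : P →* MulAut E :=
  (MulAut.conjNormal (G := G) (H := E)).comp P.subtype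

/-- The element `(x, x⁻¹)` of `E ⋊ P`, for `x ∈ Q = P ∩ E`. -/
def deltaEl {G : Type*} [Group G] (E P : Subgroup G) [E.Normal] (x : ↥(P ⊓ E)) :
    E ⋊[conjAction E P] P :=
  ⟨⟨(x : G), x.2.2⟩, (⟨(x : G), x.2.1⟩ : P)⁻¹⟩

/-!
The multiplication map `φ : E ⋊ P → G, (e, x) ↦ e x` is a homomorphism whose kernel is `ΔQ`,
and `(ΔQ)(1×P)` is the preimage `φ⁻¹(P)`. The kernel embeds into `P` through the second
coordinate, so `φ⁻¹(P)` is a `p`-group, and its index in `E ⋊ P` is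
`[φ(E ⋊ P) : P] = [EP : P] = [E : P ∩ E]`, which is prime to `p` because `P ∩ E` is Sylow in `E`.
-/

theorem Subgroup.relIndex_sup_right_of_normal {G : Type*} [Group G] (H K : Subgroup G)
    [K.Normal] [K.IsFiniteRelIndex H] : H.relIndex (H ⊔ K) = H.relIndex K := by
  have hHK : (H ⊓ K).relIndex H ≠ 0 := by
    rw [inf_relIndex_left]
    exact K.relIndex_ne_zero
  apply Nat.eq_of_mul_eq_mul_left (Nat.pos_of_ne_zero hHK)
  calc (H ⊓ K).relIndex H * H.relIndex (H ⊔ K)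
      = (H ⊓ K).relIndex (H ⊔ K) := relIndex_mul_relIndex _ _ _ inf_le_left le_sup_left
    _ = (H ⊓ K).relIndex K * K.relIndex (H ⊔ K) :=
        (relIndex_mul_relIndex _ _ _ inf_le_right le_sup_right).symm
    _ = (H ⊓ K).relIndex H * H.relIndex K := by
        rw [relIndex_sup_right, inf_relIndex_left, inf_relIndex_right, mul_comm]

theorem SemidirectProduct.range_lift {N G H : Type*} [Group N] [Group G] [Group H]
    {φ : G →* MulAut N} (fn : N →* H) (fg : G →* H)
    (h : ∀ g, fn.comp (φ g).toMonoidHom = (MulAut.conj (fg g)).toMonoidHom.comp fn) :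
    (lift fn fg h).range = fn.range ⊔ fg.range := by
  apply le_antisymm
  · rintro _ ⟨z, rfl⟩
    exact mul_mem (Subgroup.mem_sup_left ⟨z.left, rfl⟩) (Subgroup.mem_sup_right ⟨z.right, rfl⟩)
  · refine sup_le ?_ ?_ <;> rintro _ ⟨x, rfl⟩
    exacts [⟨inl x, lift_inl fn fg h x⟩, ⟨inr x, lift_inr fn fg h x⟩]

section Multiplication

variable {G : Type*} [Group G] (E P : Subgroup G) [E.Normal]

def semidirectMul : E ⋊[conjAction E P] P →* G :=
  lift E.subtype P.subtype fun g ↦ by ext; simp [conjAction]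

theorem semidirectMul_apply (z : E ⋊[conjAction E P] P) :
    semidirectMul E P z = (z.left : G) * z.right :=
  rfl

theorem range_semidirectMul : (semidirectMul E P).range = E ⊔ P := by
  rw [semidirectMul, range_lift, Subgroup.range_subtype, Subgroup.range_subtype]

theorem injective_rightHom_comp_ker_semidirectMul :
    Function.Injective (rightHom.comp (semidirectMul E P).ker.subtype) := by
  rw [injective_iff_map_eq_one]
  rintro ⟨z, hz⟩ hright
  replace hright : z.right = 1 := hright
  have hleft : (z.left : G) * z.right = 1 := hz
  rw [hright, OneMemClass.coe_one, mul_one] at hleft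
  exact Subtype.ext (SemidirectProduct.ext (Subtype.ext hleft) hright)

theorem isPGroup_ker_semidirectMul {p : ℕ} (hP : IsPGroup p P) :
    IsPGroup p (semidirectMul E P).ker :=
  hP.of_injective _ (injective_rightHom_comp_ker_semidirectMul E P)

theorem coe_comap_semidirectMul :
    (P.comap (semidirectMul E P) : Set (E ⋊[conjAction E P] P)) =
      Set.range (deltaEl E P) * Set.range inr := by
  ext z
  constructor
  · intro hz
    replace hz : (z.left : G) * z.right ∈ P := hz
    have hzP : (z.left : G) ∈ P := by simpa using P.mul_mem hz (P.inv_mem z.right.2)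
    refine ⟨_, ⟨⟨z.left, hzP, z.left.2⟩, rfl⟩, _, ⟨⟨_, hz⟩, rfl⟩, ?_⟩
    refine SemidirectProduct.ext ?_ (Subtype.ext ?_) <;> simp [deltaEl]
  · rintro ⟨_, ⟨x, rfl⟩, _, ⟨y, rfl⟩, rfl⟩
    simp [semidirectMul_apply, deltaEl]

end Multiplication

theorem stmt4 (p : ℕ) (hp : p.Prime) (G : Type*) [Group G] [Finite G]
    (E P : Subgroup G) [E.Normal] (hP : IsPGroup p P)
    -- `Q := P ∩ E` is a Sylow `p`-subgroup of `E`
    (hQ : ∃ S : Sylow p E, (S : Subgroup E) = (P ⊓ E).subgroupOf E) :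
    -- the product `(ΔQ)(1×P)` is a (subgroup, and a) Sylow `p`-subgroup of `H = E ⋊ P`
    ∃ T : Sylow p (E ⋊[conjAction E P] P),
      ((T : Subgroup (E ⋊[conjAction E P] P)) : Set (E ⋊[conjAction E P] P)) =
        Set.range (deltaEl E P) *
          Set.range (inr : P →* E ⋊[conjAction E P] P) := by
  have := Fact.mk hp
  have : E.IsFiniteRelIndex P := Subgroup.isFiniteRelIndex_of_finiteIndex
  obtain ⟨S, hS⟩ := hQ
  have hpgroup : IsPGroup p (P.comap (semidirectMul E P)) :=
    hP.comap_of_ker_isPGroup _ (isPGroup_ker_semidirectMul E P hP)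
  have hindex : (P.comap (semidirectMul E P)).index = (S : Subgroup E).index := by
    rw [Subgroup.index_comap, range_semidirectMul, sup_comm,
      Subgroup.relIndex_sup_right_of_normal, hS, ← Subgroup.relIndex, Subgroup.inf_relIndex_right]
  refine ⟨hpgroup.toSylow (hindex ▸ S.not_dvd_index), ?_⟩
  rw [IsPGroup.toSylow_coe, coe_comap_semidirectMul]
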